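/- Let λ = (λ_1,…,λ_k) be a partition with λ_{k+1} := 0, and let D(λ) be the twisted-diagram digraph: vertices are lattice points (t, r) ∈ ℤ×{0,…,k}; for each row i ∈ {1,…,k} there are east edges (t, i−1)→(t+1, i−1) for 0 ≤ t ≤ λ_i − 1, east edges (t, i)→(t+1, i) for 1 ≤ t ≤ λ_i, and southeast edges (t, i−1)→(t+1, i) for 0 ≤ t ≤ λ_i; the southeast edge (0, i−1)→(1, i) carries weight y, the southeast edge (t, i−1)→(t+1, i) with t > λ_{i+1} carries weight x^{t−λ_{i+1}}, and all other edges carry weight 1. Set e_i = (0, i−1) and v_j = (λ_j+1, j). Then for all 1 ≤ i, j ≤ k, the sum w_{ij} over all directed paths from e_i to v_j of the product of their edge weights equals w_{ij} = C(λ_{j+1}, j−i+1) + y·C(λ_{j+1}, j−i) + Σ_{p=1}^{λ_j − λ_{j+1}} x^p ( C(λ_{j+1}+p−1, j−i) + y·C(λ_{j+1}+p−1, j−i−1) ); in particular w_{ij} = 1 when i = j+1 and w_{ij} = 0 when i > j+1. -/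

import Mathlib

open Finset

/-- `p` is a directed path from `a` to `c` in the digraph with edge relation
`E`, recorded as its (nonempty) list of vertices: consecutive vertices are
joined by edges of the digraph. -/
def IsDiPath {V : Type} (E : V → V → Prop) (a c : V) (p : List V) : Prop :=
  p ≠ [] ∧ p.head? = some a ∧ p.getLast? = some c ∧ p.Chain' E

/-- The 1-based parts `λ_1, …, λ_k` of the partition `lam : Fin k → ℕ`,
extended by `0` outside `{1, …, k}` (so in particular `λ_{k+1} = 0`). -/
def lamE {k : ℕ} (lam : Fin k → ℕ) (t : ℕ) : ℕ :=
  if h : 1 ≤ t ∧ t ≤ k then lam ⟨t - 1, by omega⟩ else 0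

/-- The edge relation of the twisted-diagram digraph `D(λ)`.  Vertices are the
lattice points `(t, r) ∈ ℤ × ℤ` (only `r ∈ {0, …, k}` occurs in any edge); for
each row `i ∈ {1, …, k}` there are east edges `(t, i-1) → (t+1, i-1)` for
`0 ≤ t ≤ λ_i - 1`, east edges `(t, i) → (t+1, i)` for `1 ≤ t ≤ λ_i`, and
southeast edges `(t, i-1) → (t+1, i)` for `0 ≤ t ≤ λ_i`. -/
def twistE {k : ℕ} (lam : Fin k → ℕ) : ℤ × ℤ → ℤ × ℤ → Prop := fun a c =>
  ∃ i : ℕ, 1 ≤ i ∧ i ≤ k ∧ c.1 = a.1 + 1 ∧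
    ((a.2 = (i : ℤ) - 1 ∧ c.2 = (i : ℤ) - 1 ∧ 0 ≤ a.1 ∧ a.1 ≤ (lamE lam i : ℤ) - 1) ∨
     (a.2 = (i : ℤ) ∧ c.2 = (i : ℤ) ∧ 1 ≤ a.1 ∧ a.1 ≤ (lamE lam i : ℤ)) ∨
     (a.2 = (i : ℤ) - 1 ∧ c.2 = (i : ℤ) ∧ 0 ≤ a.1 ∧ a.1 ≤ (lamE lam i : ℤ)))

/-- Binomial coefficient `C(a, b)` with integer lower argument; it is `0` when
`b < 0` or `b > a`. -/
def chooseZ (a : ℕ) (b : ℤ) : ℕ := if 0 ≤ b then a.choose b.toNat else 0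

/-- The edge weights of the twisted-diagram digraph `D(λ)`: the southeast edge
`(0, i-1) → (1, i)` has weight `y`, a southeast edge `(t, i-1) → (t+1, i)` with
`t > λ_{i+1}` has weight `x^{t - λ_{i+1}}`, and every other edge has weight
`1`.  (For a southeast edge into the row `r = c.2 = i`, the relevant part is
`λ_{i+1} = lamE lam (i+1)`.) -/
def twistW {R : Type} [CommRing R] (x y : R) {k : ℕ} (lam : Fin k → ℕ) :
    ℤ × ℤ → ℤ × ℤ → R := fun a c =>
  if c.2 = a.2 + 1 then
    if a.1 = 0 then y
    else if (lamE lam (c.2.toNat + 1) : ℤ) < a.1 then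
      x ^ (a.1 - (lamE lam (c.2.toNat + 1) : ℤ)).toNat
    else 1
  else 1

/-- The weight of a directed path: the product of the weights `w` of its
edges (the pairs of consecutive vertices). -/
def pathWeight {V R : Type} [CommRing R] (w : V → V → R) (p : List V) : R :=
  ((p.zip p.tail).map fun q => w q.1 q.2).prod

/-- `twistSum x y lam i j` is `w_{ij}`: the sum, over all directed paths in the
twisted-diagram digraph `D(λ)` from `e_i = (0, i-1)` to `v_j = (λ_j + 1, j)`,
of the product of the edge weights of the path.  (Here `i j : Fin k` are
0-based, so `e_i = (0, (i : ℕ))` and `v_j = (λ_j + 1, (j : ℕ) + 1)`.) -/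
noncomputable def twistSum {R : Type} [CommRing R] (x y : R) {k : ℕ} (lam : Fin k → ℕ)
    (i j : Fin k) : R :=
  ∑ᶠ p ∈ {p : List (ℤ × ℤ) |
      IsDiPath (twistE lam) ((0 : ℤ), ((i : ℕ) : ℤ)) ((lam j : ℤ) + 1, ((j : ℕ) : ℤ) + 1) p},
    pathWeight (twistW x y lam) p

/-!
Every edge of `D(λ)` advances one column and either keeps its row or descends by one, so a path
from `e_i` to `v_j` is the lattice path determined by the set `s ⊆ {0, …, λ_j}` of the columns of
its `j - i + 1` southeast steps, and, `λ` being a partition, every such set gives a path. Only two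
of these steps can have weight `≠ 1`: a step at column `0` (weight `y`) and the last one, into
row `j`, of weight `x ^ (max s - λ_{j+1})`; every earlier step ends in a row `r < j` and starts
left of column `λ_j ≤ λ_{r+1}`. Summing over the sets `s` column by column gives the binomial
formula.
-/

section Counting

variable {R : Type*} [CommSemiring R]

lemma chooseZ_natCast (a n : ℕ) : chooseZ a n = a.choose n := by
  simp [chooseZ]

lemma chooseZ_zero (a : ℕ) : chooseZ a 0 = 1 := by
  simp [chooseZ]

lemma chooseZ_of_neg (a : ℕ) {b : ℤ} (hb : b < 0) : chooseZ a b = 0 := by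
  simp [chooseZ, hb.not_ge]

lemma Finset.sum_powersetCard_succ_insert {α β : Type*} [DecidableEq α] [AddCommMonoid β]
    {a : α} {A : Finset α} (ha : a ∉ A) (d : ℕ) (f : Finset α → β) :
    ∑ s ∈ powersetCard (d + 1) (insert a A), f s
      = ∑ s ∈ powersetCard (d + 1) A, f s + ∑ s ∈ powersetCard d A, f (insert a s) := by
  rw [powersetCard_succ_insert ha, sum_union, sum_image]
  · intro u hu v hv huv
    rw [← erase_insert (fun h => ha (mem_powersetCard.1 hu |>.1 h)),
      ← erase_insert (fun h => ha (mem_powersetCard.1 hv |>.1 h)), huv]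
  · refine disjoint_left.2 fun s hs hs' => ?_
    obtain ⟨u, -, rfl⟩ := mem_image.1 hs'
    exact ha (mem_powersetCard.1 hs |>.1 (mem_insert_self a u))

lemma sum_powersetCard_insert_ite_mem (y : R) {α : Type*} [DecidableEq α] {a : α}
    {A : Finset α} (ha : a ∉ A) (n : ℕ) :
    ∑ s ∈ powersetCard n (insert a A), (if a ∈ s then y else 1)
      = chooseZ #A n + y * chooseZ #A (n - 1) := by
  cases n with
  | zero => simp [chooseZ_zero, chooseZ_of_neg]
  | succ d =>
    have hA : ∀ s ∈ powersetCard (d + 1) A, a ∉ s := fun s hs h =>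
      ha (mem_powersetCard.1 hs |>.1 h)
    rw [sum_powersetCard_succ_insert ha, sum_congr rfl fun s hs => if_neg (hA s hs)]
    rw [show ((d + 1 : ℕ) : ℤ) - 1 = d by push_cast; ring, chooseZ_natCast, chooseZ_natCast]
    simp [card_powersetCard, mul_comm]

lemma sum_powersetCard_range_ite_zero_mem (y : R) (m n : ℕ) :
    ∑ s ∈ powersetCard n (range (m + 1)), (if 0 ∈ s then y else 1)
      = chooseZ m n + y * chooseZ m (n - 1) := by
  have h0 : 0 ∈ range (m + 1) := mem_range.2 m.succ_pos
  rw [← insert_erase h0, sum_powersetCard_insert_ite_mem y (notMem_erase 0 _),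
    card_erase_of_mem h0, card_range, Nat.add_sub_cancel]

lemma sum_powersetCard_range_ite_mul_pow_sup (x y : R) {μ M : ℕ} (hμM : μ ≤ M) {n : ℕ} {c : ℤ}
    (hn : (n : ℤ) = c + 1) :
    ∑ s ∈ powersetCard n (range (M + 1)), (if 0 ∈ s then y else 1) * x ^ (s.sup id - μ)
      = chooseZ μ (c + 1) + y * chooseZ μ c
        + ∑ p ∈ Icc 1 (M - μ),
            x ^ p * (chooseZ (μ + p - 1) c + y * chooseZ (μ + p - 1) (c - 1)) := by
  obtain _ | d := n
  · obtain rfl : c = -1 := by omega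
    simp [chooseZ_zero, chooseZ_of_neg]
  obtain rfl : c = d := by omega
  induction M, hμM using Nat.le_induction with
  | base =>
    have hsup : ∀ s ∈ powersetCard (d + 1) (range (μ + 1)), s.sup id - μ = 0 := fun s hs =>
      Nat.sub_eq_zero_of_le <| Finset.sup_le fun t ht =>
        Nat.lt_succ_iff.1 <| mem_range.1 <| (mem_powersetCard.1 hs).1 ht
    rw [sum_congr rfl fun s hs => by rw [hsup s hs, pow_zero, mul_one],
      sum_powersetCard_range_ite_zero_mem, Nat.sub_self, Icc_eq_empty_of_lt one_pos, sum_empty,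
      add_zero]
    push_cast [add_sub_cancel_right]
    rfl
  | succ M hμM ih =>
    have hnew : ∀ s ∈ powersetCard d (range (M + 1)),
        (if 0 ∈ insert (M + 1) s then y else 1) * x ^ ((insert (M + 1) s).sup id - μ)
          = x ^ (M + 1 - μ) * (if 0 ∈ s then y else 1) := by
      intro s hs
      have hsup : s.sup id ≤ M + 1 := Finset.sup_le fun t ht =>
        (mem_range.1 <| (mem_powersetCard.1 hs).1 ht).le
      simp only [sup_insert, id, max_eq_left hsup, mul_comm, mem_insert, (M.succ_ne_zero).symm,
        false_or]
    rw [range_add_one, sum_powersetCard_succ_insert (by simp), ih, sum_congr rfl hnew,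
      ← mul_sum, sum_powersetCard_range_ite_zero_mem, show M + 1 - μ = M - μ + 1 by omega,
      sum_Icc_succ_top (by omega), show μ + (M - μ + 1) - 1 = M by omega]
    ring

end Counting

section LatticePath

def stairHeight (i0 : ℕ) (s : Finset ℕ) (t : ℕ) : ℕ := i0 + #(s ∩ range t)

def latticePath (i0 L : ℕ) (s : Finset ℕ) : List (ℤ × ℤ) :=
  (List.range L).map fun t : ℕ => ((t : ℤ), (stairHeight i0 s t : ℤ))

variable {i0 : ℕ} {s : Finset ℕ}

@[simp]
lemma stairHeight_zero : stairHeight i0 s 0 = i0 := by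
  simp [stairHeight]

lemma stairHeight_succ (t : ℕ) :
    stairHeight i0 s (t + 1) = stairHeight i0 s t + if t ∈ s then 1 else 0 := by
  unfold stairHeight
  split_ifs with ht
  · rw [range_add_one, inter_insert_of_mem ht, card_insert_of_notMem (by simp), add_assoc]
  · rw [range_add_one, inter_insert_of_notMem ht, add_zero]

lemma stairHeight_mono : Monotone (stairHeight i0 s) := fun _ _ h =>
  Nat.add_le_add_left (card_le_card <| inter_subset_inter_left <| range_mono h) _

lemma stairHeight_of_subset_range {t : ℕ} (hs : s ⊆ range t) :
    stairHeight i0 s t = i0 + #s := by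
  rw [stairHeight, inter_eq_left.2 hs]

@[simp]
lemma latticePath_length (L : ℕ) : (latticePath i0 L s).length = L := by
  simp [latticePath]

lemma latticePath_getElem {L m : ℕ} (hm : m < (latticePath i0 L s).length) :
    (latticePath i0 L s)[m] = ((m : ℤ), (stairHeight i0 s m : ℤ)) := by
  simp [latticePath]

lemma latticePath_head? (L : ℕ) :
    (latticePath i0 (L + 1) s).head? = some ((0 : ℤ), (i0 : ℤ)) := by
  simp [latticePath, List.range_succ_eq_map]

lemma latticePath_getLast? (L : ℕ) :
    (latticePath i0 (L + 1) s).getLast? = some ((L : ℤ), (stairHeight i0 s L : ℤ)) := by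
  simp [latticePath, List.range_succ]

lemma latticePath_injOn (L : ℕ) : Set.InjOn (latticePath i0 (L + 1)) {s | s ⊆ range L} := by
  intro s hs s' hs' h
  have hheight : ∀ t ≤ L, stairHeight i0 s t = stairHeight i0 s' t := fun t ht => by
    have := congrArg (·[t]?) h
    simpa [latticePath, Nat.lt_succ_iff.2 ht] using this
  ext t
  by_cases htL : t < L
  · have := hheight (t + 1) htL
    rw [stairHeight_succ, stairHeight_succ, hheight t htL.le] at this
    split_ifs at this <;> simp_all
  · exact iff_of_false (fun ht => htL (mem_range.1 (hs ht)))
      (fun ht => htL (mem_range.1 (hs' ht)))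

lemma exists_eq_latticePath {p : List (ℤ × ℤ)} (hne : p ≠ [])
    (hhead : p.head? = some ((0 : ℤ), (i0 : ℤ)))
    (hchain : p.IsChain fun a c => c.1 = a.1 + 1 ∧ (c.2 = a.2 ∨ c.2 = a.2 + 1)) :
    ∃ s ⊆ range (p.length - 1), p = latticePath i0 p.length s := by
  classical
  let s := (range (p.length - 1)).filter fun t => (p.getD (t + 1) 0).2 = (p.getD t 0).2 + 1
  have hp : ∀ m (hm : m < p.length), p[m] = ((m : ℤ), (stairHeight i0 s m : ℤ)) := by
    intro m hm
    induction m with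
    | zero =>
      obtain ⟨a, l, rfl⟩ := List.exists_cons_of_ne_nil hne
      simp_all
    | succ m ih =>
      obtain ⟨h1, h2⟩ := List.isChain_iff_getElem.1 hchain m hm
      have hmem : m ∈ s ↔ p[m + 1].2 = p[m].2 + 1 := by
        rw [mem_filter, mem_range, List.getD_eq_getElem _ _ hm,
          List.getD_eq_getElem _ _ (by omega)]
        exact and_iff_right (by omega)
      rw [ih (by omega)] at h1 h2 hmem
      rw [stairHeight_succ]
      ext
      · simp [h1]
      · split_ifs at hmem ⊢ with hm' <;> simp_all
  refine ⟨s, filter_subset _ _, List.ext_getElem (by simp) fun m hm _ => ?_⟩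
  rw [latticePath_getElem, hp]

lemma pathWeight_map_range {V R : Type} [CommRing R] (w : V → V → R) (g : ℕ → V) (L : ℕ) :
    pathWeight w ((List.range (L + 1)).map g) = ∏ t ∈ range L, w (g t) (g (t + 1)) := by
  induction L generalizing g with
  | zero => simp [pathWeight]
  | succ L ih =>
    have ih' : pathWeight w ((List.range (L + 1)).map (g ∘ Nat.succ))
        = ∏ t ∈ range L, w (g (t + 1)) (g (t + 1 + 1)) := ih _
    rw [List.range_succ_eq_map, List.map_cons, List.map_map, prod_range_succ', ← ih',
      List.range_succ_eq_map, List.map_cons]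
    simp [pathWeight, mul_comm]

end LatticePath

section TwistedDiagram

variable {k : ℕ} {lam : Fin k → ℕ} {R : Type} [CommRing R] (x y : R)

lemma lamE_antitone (hlam : ∀ i j : Fin k, i ≤ j → lam j ≤ lam i) {a b : ℕ} (ha : 1 ≤ a)
    (hab : a ≤ b) : lamE lam b ≤ lamE lam a := by
  unfold lamE
  split_ifs with hb ha'
  · exact hlam _ _ (Fin.mk_le_mk.2 (by omega))
  · omega
  · exact Nat.zero_le _
  · exact Nat.zero_le _

lemma lamE_pos (hpos : ∀ i, 0 < lam i) {a : ℕ} (ha : 1 ≤ a) (hak : a ≤ k) : 0 < lamE lam a := by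
  rw [lamE, dif_pos ⟨ha, hak⟩]
  exact hpos _

lemma lamE_val_add_one (j : Fin k) : lamE lam ((j : ℕ) + 1) = lam j := by
  rw [lamE, dif_pos ⟨by omega, j.isLt⟩]
  rfl

lemma twistE_east_top {t r : ℕ} (hr : r < k) (ht : t < lamE lam (r + 1)) :
    twistE lam ((t : ℤ), (r : ℤ)) (((t + 1 : ℕ) : ℤ), (r : ℤ)) :=
  ⟨r + 1, by omega, hr, by push_cast; ring, Or.inl (by push_cast; omega)⟩

lemma twistE_east_bottom {t r : ℕ} (hr1 : 1 ≤ r) (hr : r ≤ k) (ht1 : 1 ≤ t)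
    (ht : t ≤ lamE lam r) :
    twistE lam ((t : ℤ), (r : ℤ)) (((t + 1 : ℕ) : ℤ), (r : ℤ)) :=
  ⟨r, hr1, hr, by push_cast; ring, Or.inr (Or.inl (by omega))⟩

lemma twistE_southeast {t r : ℕ} (hr : r < k) (ht : t ≤ lamE lam (r + 1)) :
    twistE lam ((t : ℤ), (r : ℤ)) (((t + 1 : ℕ) : ℤ), ((r + 1 : ℕ) : ℤ)) :=
  ⟨r + 1, by omega, hr, by push_cast; ring, Or.inr (Or.inr (by push_cast; omega))⟩

lemma twistE_step {a c : ℤ × ℤ} (h : twistE lam a c) :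
    c.1 = a.1 + 1 ∧ (c.2 = a.2 ∨ c.2 = a.2 + 1) := by
  obtain ⟨_, -, -, hc, h | h | h⟩ := h <;> omega

lemma latticePath_isDiPath (hlam : ∀ i j : Fin k, i ≤ j → lam j ≤ lam i)
    (hpos : ∀ i, 0 < lam i) {i j : Fin k} {s : Finset ℕ} (hs : s ⊆ range (lam j + 1))
    (hcard : i + #s = j + 1) :
    IsDiPath (twistE lam) ((0 : ℤ), ((i : ℕ) : ℤ)) ((lam j : ℤ) + 1, ((j : ℕ) : ℤ) + 1)
      (latticePath i (lam j + 2) s) := by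
  refine ⟨List.ne_nil_of_length_pos (by simp), latticePath_head? _, ?_, ?_⟩
  · rw [latticePath_getLast?, stairHeight_of_subset_range hs, hcard]
    push_cast
    rfl
  rw [List.Chain', latticePath, List.isChain_map, List.isChain_range_succ]
  intro m hm
  have hend : stairHeight i s (lam j + 1) = j + 1 := by
    rw [stairHeight_of_subset_range hs, hcard]
  have hmono := stairHeight_mono (i0 := i) (s := s) (show m + 1 ≤ lam j + 1 by omega)
  have hlamE : ∀ r : ℕ, 1 ≤ r → r ≤ (j : ℕ) + 1 → lam j ≤ lamE lam r := fun r hr1 hrj =>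
    lamE_val_add_one (lam := lam) j ▸ lamE_antitone hlam hr1 hrj
  have hsucc := stairHeight_succ (i0 := i) (s := s) m
  by_cases hms : m ∈ s
  · rw [if_pos hms] at hsucc
    rw [hsucc]
    exact twistE_southeast (by omega) <| (show m ≤ lam j by omega).trans <|
      hlamE _ (by omega) (by omega)
  rw [if_neg hms, add_zero] at hsucc
  rw [hsucc]
  -- an east step in row `r` is a lower edge of strip `r`, unless it is at column `0` or `r = 0`
  rcases Nat.eq_zero_or_pos m with rfl | hm0
  · rw [stairHeight_zero]
    exact twistE_east_top i.isLt (lamE_pos hpos (by omega) (by omega))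
  rcases Nat.eq_zero_or_pos (stairHeight i s m) with h0 | h0
  · rw [h0]
    have hmj : m < lam j := by
      by_contra
      obtain rfl : m = lam j := by omega
      omega
    exact twistE_east_top (by omega) (hmj.trans_le (hlamE 1 le_rfl (by omega)))
  · exact twistE_east_bottom h0 (by omega) hm0 <| (show m ≤ lam j by omega).trans <|
      hlamE _ h0 (by omega)

lemma exists_eq_latticePath_of_isDiPath {i0 : ℕ} {c : ℤ × ℤ} {p : List (ℤ × ℤ)}
    (hp : IsDiPath (twistE lam) ((0 : ℤ), (i0 : ℤ)) c p) :
    ∃ s ⊆ range (p.length - 1),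
      p = latticePath i0 p.length s ∧ c = ((p.length : ℤ) - 1, (i0 : ℤ) + #s) := by
  obtain ⟨hne, hhead, hlast, hchain⟩ := hp
  obtain ⟨s, hs, hps⟩ := exists_eq_latticePath hne hhead (hchain.imp fun _ _ => twistE_step)
  refine ⟨s, hs, hps, ?_⟩
  obtain ⟨L, hL⟩ : ∃ L, p.length = L + 1 := Nat.exists_eq_succ_of_ne_zero (by simpa using hne)
  rw [hps, hL, latticePath_getLast?, Option.some_inj] at hlast
  rw [← hlast, hL, stairHeight_of_subset_range (by simpa [hL] using hs)]
  push_cast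
  simp

lemma twistSum_eq_sum (hlam : ∀ i j : Fin k, i ≤ j → lam j ≤ lam i) (hpos : ∀ i, 0 < lam i)
    {i j : Fin k} (hij : (i : ℕ) ≤ j + 1) :
    twistSum x y lam i j = ∑ s ∈ powersetCard (j + 1 - i) (range (lam j + 1)),
      pathWeight (twistW x y lam) (latticePath i (lam j + 2) s) := by
  have hpaths : {p | IsDiPath (twistE lam) ((0 : ℤ), ((i : ℕ) : ℤ))
      ((lam j : ℤ) + 1, ((j : ℕ) : ℤ) + 1) p}
        = ((powersetCard (j + 1 - i) (range (lam j + 1))).image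
            (latticePath i (lam j + 2)) : Set (List (ℤ × ℤ))) := by
    ext p
    simp only [Set.mem_ofPred_eq, coe_image, Set.mem_image, mem_coe, mem_powersetCard]
    constructor
    · intro hp
      obtain ⟨s, hs, hps, hc⟩ := exists_eq_latticePath_of_isDiPath hp
      simp only [Prod.mk.injEq] at hc
      have hlen : p.length = lam j + 2 := by omega
      rw [hlen] at hs hps
      exact ⟨s, ⟨hs, by omega⟩, hps.symm⟩
    · rintro ⟨s, ⟨hs, hcard⟩, rfl⟩
      exact latticePath_isDiPath hlam hpos hs (by omega)
  rw [twistSum, hpaths, finsum_mem_coe_finset, sum_image fun s hs s' hs' =>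
    latticePath_injOn _ (mem_powersetCard.1 hs).1 (mem_powersetCard.1 hs').1]

lemma twistSum_eq_zero_of_lt {i j : Fin k} (hji : (j : ℕ) + 1 < i) :
    twistSum x y lam i j = 0 := by
  have hpaths : {p | IsDiPath (twistE lam) ((0 : ℤ), ((i : ℕ) : ℤ))
      ((lam j : ℤ) + 1, ((j : ℕ) : ℤ) + 1) p} = ∅ := by
    refine Set.eq_empty_of_forall_notMem fun p hp => ?_
    obtain ⟨s, -, -, hc⟩ := exists_eq_latticePath_of_isDiPath hp
    simp only [Prod.mk.injEq] at hc
    omega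
  rw [twistSum, hpaths, finsum_mem_empty]

lemma twistW_of_snd_eq {a c : ℤ × ℤ} (h : c.2 = a.2) : twistW x y lam a c = 1 := by
  simp [twistW, h]

-- The truncated exponent makes the factor `1` when `t ≤ λ_{r+2}`.
lemma twistW_southeast (t r : ℕ) (c₁ : ℤ) :
    twistW x y lam ((t : ℤ), (r : ℤ)) (c₁, ((r + 1 : ℕ) : ℤ))
      = (if t = 0 then y else 1) * x ^ (t - lamE lam (r + 2)) := by
  rw [twistW, if_pos (by push_cast; ring)]
  simp only [Int.toNat_natCast, Nat.cast_eq_zero, Nat.cast_lt, add_assoc, Nat.reduceAdd]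
  split_ifs with ht hlt
  · simp [ht]
  · rw [one_mul]
    congr 1
    omega
  · rw [one_mul, Nat.sub_eq_zero_of_le (not_lt.1 hlt), pow_zero]

lemma pathWeight_latticePath (hlam : ∀ i j : Fin k, i ≤ j → lam j ≤ lam i) {i j : Fin k}
    {s : Finset ℕ} (hs : s ⊆ range (lam j + 1)) (hcard : i + #s = j + 1) :
    pathWeight (twistW x y lam) (latticePath i (lam j + 2) s)
      = (if 0 ∈ s then y else 1) * x ^ (s.sup id - lamE lam (j + 2)) := by
  have hsucc : ∀ t ∈ s, stairHeight i s (t + 1) = stairHeight i s t + 1 := fun t ht => by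
    rw [stairHeight_succ, if_pos ht]
  rw [latticePath, pathWeight_map_range, ← prod_subset hs fun t _ ht => twistW_of_snd_eq x y
    (by rw [stairHeight_succ, if_neg ht, add_zero]),
    prod_congr rfl fun t ht => by rw [hsucc t ht, twistW_southeast], prod_mul_distrib,
    prod_ite_eq', prod_pow_eq_pow_sum]
  congr 2
  rcases s.eq_empty_or_nonempty with rfl | hne
  · simp
  obtain ⟨T, hT, hTsup⟩ := exists_mem_eq_sup s hne id
  have hTmax : ∀ t ∈ s, t ≤ T := fun t ht => (le_sup (f := id) ht).trans_eq hTsup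
  have hTheight : stairHeight i s T + 1 = j + 1 := by
    rw [← hsucc T hT, stairHeight_of_subset_range fun t ht =>
      mem_range.2 (Nat.lt_succ_of_le (hTmax t ht)), hcard]
  rw [hTsup, sum_eq_single_of_mem T hT, id, show stairHeight i s T + 2 = j + 2 by omega]
  intro t ht htT
  have hlt : t < T := lt_of_le_of_ne (hTmax t ht) htT
  have hheight : stairHeight i s t + 1 ≤ stairHeight i s T := hsucc t ht ▸ stairHeight_mono hlt
  have hT_le : T ≤ lam j := Nat.lt_succ_iff.1 (mem_range.1 (hs hT))
  have hlamE : lam j ≤ lamE lam (stairHeight i s t + 2) :=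
    lamE_val_add_one (lam := lam) j ▸ lamE_antitone hlam (by omega) (by omega)
  omega

end TwistedDiagram

/-- **The path-weight sums of the twisted-diagram digraph** (the entries of the
LGV matrix): `w_{ij} = C(λ_{j+1}, j-i+1) + y C(λ_{j+1}, j-i)
  + Σ_{p=1}^{λ_j-λ_{j+1}} x^p (C(λ_{j+1}+p-1, j-i) + y C(λ_{j+1}+p-1, j-i-1))`;
in particular `w_{ij} = 1` when `i = j+1` and `w_{ij} = 0` when `i > j+1`
(1-based indices; below `i j : Fin k` are 0-based). -/
theorem stmt11 (R : Type) [CommRing R] (x y : R) (k : ℕ) (lam : Fin k → ℕ)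
    (hlam : ∀ i j : Fin k, i ≤ j → lam j ≤ lam i) (hpos : ∀ i, 0 < lam i) (i j : Fin k) :
    (twistSum x y lam i j
      = ((chooseZ (lamE lam ((j : ℕ) + 2)) (((j : ℕ) : ℤ) - ((i : ℕ) : ℤ) + 1) : ℕ) : R)
        + y * ((chooseZ (lamE lam ((j : ℕ) + 2)) (((j : ℕ) : ℤ) - ((i : ℕ) : ℤ)) : ℕ) : R)
        + ∑ p ∈ Finset.Icc 1 (lamE lam ((j : ℕ) + 1) - lamE lam ((j : ℕ) + 2)),
            x ^ p *
              (((chooseZ (lamE lam ((j : ℕ) + 2) + p - 1)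
                  (((j : ℕ) : ℤ) - ((i : ℕ) : ℤ)) : ℕ) : R)
                + y * ((chooseZ (lamE lam ((j : ℕ) + 2) + p - 1)
                    (((j : ℕ) : ℤ) - ((i : ℕ) : ℤ) - 1) : ℕ) : R)))
    ∧ ((i : ℕ) = (j : ℕ) + 1 → twistSum x y lam i j = 1)
    ∧ ((j : ℕ) + 1 < (i : ℕ) → twistSum x y lam i j = 0) := by
  rcases lt_or_ge ((j : ℕ) + 1) i with hji | hij
  · have h₁ : ((j : ℕ) : ℤ) - (i : ℕ) + 1 < 0 := by omega
    have h₂ : ((j : ℕ) : ℤ) - (i : ℕ) < 0 := by omega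
    have h₃ : ((j : ℕ) : ℤ) - (i : ℕ) - 1 < 0 := by omega
    refine ⟨?_, by omega, fun _ => twistSum_eq_zero_of_lt x y hji⟩
    simp [twistSum_eq_zero_of_lt x y hji, chooseZ_of_neg _ h₁, chooseZ_of_neg _ h₂,
      chooseZ_of_neg _ h₃]
  have hμ : lamE lam ((j : ℕ) + 2) ≤ lam j :=
    lamE_val_add_one (lam := lam) j ▸ lamE_antitone hlam (by omega) (by omega)
  refine (fun hmain => ⟨hmain, fun _ => hmain.trans ?_, fun h => absurd h (by omega)⟩) ?_
  · rw [twistSum_eq_sum x y hlam hpos hij, sum_congr rfl fun s hs => pathWeight_latticePath x y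
      hlam (mem_powersetCard.1 hs).1 (by have := (mem_powersetCard.1 hs).2; omega),
      sum_powersetCard_range_ite_mul_pow_sup x y hμ (c := (j : ℤ) - i) (by omega), lamE_val_add_one]
  · have h₀ : ((j : ℕ) : ℤ) - (i : ℕ) = -1 := by omega
    simp [h₀, chooseZ_zero, chooseZ_of_neg]
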